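/- The subadditive function on an even ground set of size m defined by f(S) = 1 for ∅ ≠ S ≠ M and f(M) = 2 (f(∅)=0) is not MPH-k for any k < m/2, but is MPH-(m/2). -/

import Mathlib

/-!
If `g` is PH-`k`, every hyperedge of `g` misses at least `m - k` points, so double counting gives
`∑ₐ g (M \ {a}) ≥ (m - k) · g M`. A PH-`k` function below `f` that attains `f M = 2` would thus
force `m ≥ 2 (m - k)`, since `f (M \ {a}) = 1`. Conversely, for a set `A` with `|A| = |Aᶜ| = m/2`,
`f` is the pointwise maximum of `S ↦ [A ⊆ S] + [Aᶜ ⊆ S]` and the indicators `S ↦ [a ∈ S]`.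
-/

open Finset

universe u

/-- `v` is a PH-`k` function: it has a nonnegative hypergraph representation of rank at most `k`. -/
def IsPH {ι : Type u} (k : ℕ) (v : Finset ι → ℝ) : Prop :=
  ∃ h : Finset ι → ℝ, (∀ T, 0 ≤ h T) ∧ h ∅ = 0 ∧ (∀ T, k < T.card → h T = 0) ∧
    ∀ S, v S = ∑ T ∈ S.powerset, h T

/-- `v` is MPH-`k`: it is the pointwise (attained) maximum of a family of PH-`k` functions. -/
def IsMPH {ι : Type u} (k : ℕ) (v : Finset ι → ℝ) : Prop :=
  ∃ (L : Type u) (g : L → Finset ι → ℝ),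
    (∀ ℓ, IsPH k (g ℓ)) ∧ (∀ ℓ S, g ℓ S ≤ v S) ∧ ∀ S, ∃ ℓ, g ℓ S = v S

section

variable {ι : Type u} {k : ℕ}

theorem isPH_sum_ite_subset [DecidableEq ι] (𝒜 : Finset (Finset ι)) (hempty : ∅ ∉ 𝒜)
    (hcard : ∀ A ∈ 𝒜, #A ≤ k) :
    IsPH k (fun S => ∑ A ∈ 𝒜, if A ⊆ S then (1 : ℝ) else 0) := by
  refine ⟨fun T => if T ∈ 𝒜 then 1 else 0, fun T => by positivity, if_neg hempty,
    fun T hT => if_neg fun hT𝒜 => (hcard T hT𝒜).not_gt hT, fun S => ?_⟩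
  simp only [sum_boole]
  congr 2
  ext A
  simp [and_comm]

theorem isMPH_of_forall_exists {v : Finset ι → ℝ}
    (h : ∀ S, ∃ g, IsPH k g ∧ g ≤ v ∧ g S = v S) : IsMPH k v := by
  choose g hPH hle heq using h
  exact ⟨Finset ι, g, hPH, hle, fun S => ⟨S, heq S⟩⟩

variable [Fintype ι]

theorem one_le_card_div_two [Nonempty ι] (heven : Even (Fintype.card ι)) :
    1 ≤ Fintype.card ι / 2 := by
  obtain ⟨t, ht⟩ := heven
  have := Fintype.card_pos (α := ι)
  omega

variable [DecidableEq ι]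

/-- Double counting: `∑ a, g (univ.erase a) = ∑ T, (m - #T) • h T` for the hypergraph `h` of `g`,
and `h` lives on sets of size at most `k`. -/
theorem IsPH.card_sub_mul_le_sum_erase {g : Finset ι → ℝ} (hg : IsPH k g) :
    ((Fintype.card ι : ℝ) - k) * g univ ≤ ∑ a, g (univ.erase a) := by
  obtain ⟨h, hnonneg, -, hrank, hsum⟩ := hg
  have hcount : ∑ a, g (univ.erase a) = ∑ T, ((Fintype.card ι : ℝ) - #T) * h T := by
    simp only [hsum]
    rw [sum_comm' (t' := univ) (s' := fun T => Tᶜ) (fun a T => by simp [subset_erase])]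
    refine sum_congr rfl fun T _ => ?_
    rw [sum_const, card_compl, nsmul_eq_mul, Nat.cast_sub (card_le_univ T)]
  calc ((Fintype.card ι : ℝ) - k) * g univ = ∑ T, ((Fintype.card ι : ℝ) - k) * h T := by
        rw [hsum, powerset_univ, mul_sum]
    _ ≤ ∑ T, ((Fintype.card ι : ℝ) - #T) * h T := by
        refine sum_le_sum fun T _ => ?_
        rcases le_or_gt #T k with hT | hT
        · gcongr
          exact hnonneg T
        · simp [hrank T hT]
    _ = ∑ a, g (univ.erase a) := hcount.symm

theorem IsMPH.card_sub_mul_le_sum_erase {v : Finset ι → ℝ} (hv : IsMPH k v) :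
    ((Fintype.card ι : ℝ) - k) * v univ ≤ ∑ a, v (univ.erase a) := by
  obtain ⟨L, g, hPH, hle, hmax⟩ := hv
  obtain ⟨ℓ, hℓ⟩ := hmax univ
  calc ((Fintype.card ι : ℝ) - k) * v univ = ((Fintype.card ι : ℝ) - k) * g ℓ univ := by
        rw [hℓ]
    _ ≤ ∑ a, g ℓ (univ.erase a) := IsPH.card_sub_mul_le_sum_erase (hPH ℓ)
    _ ≤ ∑ a, v (univ.erase a) := sum_le_sum fun a _ => hle ℓ _

def twoLevelFun (S : Finset ι) : ℝ :=
  if S = ∅ then 0 else if S = univ then 2 else 1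

@[simp]
theorem twoLevelFun_empty : twoLevelFun (∅ : Finset ι) = 0 := if_pos rfl

theorem twoLevelFun_univ [Nonempty ι] : twoLevelFun (univ : Finset ι) = 2 := by
  simp [twoLevelFun, univ_nonempty.ne_empty]

theorem twoLevelFun_of_ne_univ {S : Finset ι} (hS : S.Nonempty) (hSu : S ≠ univ) :
    twoLevelFun S = 1 := by
  simp [twoLevelFun, hS.ne_empty, hSu]

theorem twoLevelFun_nonneg (S : Finset ι) : 0 ≤ twoLevelFun S := by
  unfold twoLevelFun
  split_ifs <;> norm_num

theorem one_le_twoLevelFun {S : Finset ι} (hS : S.Nonempty) : 1 ≤ twoLevelFun S := by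
  unfold twoLevelFun
  split_ifs <;> simp_all

theorem twoLevelFun_le_two (S : Finset ι) : twoLevelFun S ≤ 2 := by
  unfold twoLevelFun
  split_ifs <;> norm_num

theorem twoLevelFun_le_one_of_ne_univ {S : Finset ι} (hSu : S ≠ univ) : twoLevelFun S ≤ 1 := by
  unfold twoLevelFun
  split_ifs <;> simp_all

theorem twoLevelFun_union_le (S T : Finset ι) :
    twoLevelFun (S ∪ T) ≤ twoLevelFun S + twoLevelFun T := by
  rcases S.eq_empty_or_nonempty with rfl | hS
  · simp
  rcases T.eq_empty_or_nonempty with rfl | hT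
  · simp
  linarith [twoLevelFun_le_two (S ∪ T), one_le_twoLevelFun hS, one_le_twoLevelFun hT]

theorem not_isMPH_twoLevelFun (hk : 2 * k < Fintype.card ι) :
    ¬ IsMPH k (twoLevelFun (ι := ι)) := by
  intro hv
  have : Nonempty ι := Fintype.card_pos_iff.mp (by omega)
  have hcoatoms : ∑ a : ι, twoLevelFun (univ.erase a) ≤ Fintype.card ι :=
    calc ∑ a : ι, twoLevelFun (univ.erase a) ≤ ∑ _a : ι, (1 : ℝ) :=
          sum_le_sum fun a _ => twoLevelFun_le_one_of_ne_univ (erase_ssubset (mem_univ a)).ne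
      _ = Fintype.card ι := by simp
  have hcrit := IsMPH.card_sub_mul_le_sum_erase hv
  rw [twoLevelFun_univ] at hcrit
  have hk' : (2 * k : ℝ) < Fintype.card ι := by exact_mod_cast hk
  linarith

theorem exists_isPH_le_twoLevelFun_eq_two [Nonempty ι] (heven : Even (Fintype.card ι)) :
    ∃ g : Finset ι → ℝ, IsPH (Fintype.card ι / 2) g ∧ g ≤ twoLevelFun ∧ g univ = 2 := by
  obtain ⟨A, -, hA⟩ := exists_subset_card_eq (s := (univ : Finset ι))
    (n := Fintype.card ι / 2) (by simp [Nat.div_le_self])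
  have hAc : #Aᶜ = Fintype.card ι / 2 := by
    obtain ⟨t, ht⟩ := heven
    rw [card_compl, hA]
    omega
  have hhalf := one_le_card_div_two heven
  have hAne : A.Nonempty := card_pos.mp (hA ▸ hhalf)
  have hAcne : Aᶜ.Nonempty := card_pos.mp (hAc ▸ hhalf)
  have hAA : A ≠ Aᶜ := ne_compl_self
  refine ⟨_, isPH_sum_ite_subset {A, Aᶜ} ?_ ?_, fun T => ?_, ?_⟩
  · simp [eq_comm, ← not_nonempty_iff_eq_empty, hAne, hAcne]
  · simp [hA, hAc]
  · dsimp only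
    rw [sum_pair hAA]
    by_cases hT : T = univ
    · subst hT
      rw [twoLevelFun_univ]
      split_ifs <;> norm_num
    · have hnot : ¬ (A ⊆ T ∧ Aᶜ ⊆ T) := fun h =>
        hT (univ_subset_iff.mp (union_compl A ▸ union_subset h.1 h.2))
      split_ifs with h1 h2 h2
      · exact absurd ⟨h1, h2⟩ hnot
      · simpa using one_le_twoLevelFun (hAne.mono h1)
      · simpa using one_le_twoLevelFun (hAcne.mono h2)
      · simpa using twoLevelFun_nonneg T
  · simp [sum_pair hAA]
    norm_num

theorem isMPH_twoLevelFun (heven : Even (Fintype.card ι)) :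
    IsMPH (Fintype.card ι / 2) (twoLevelFun (ι := ι)) := by
  refine isMPH_of_forall_exists fun S => ?_
  rcases S.eq_empty_or_nonempty with rfl | ⟨a, ha⟩
  · exact ⟨_, isPH_sum_ite_subset ∅ (notMem_empty _) (by simp),
      fun T => by simpa using twoLevelFun_nonneg T, by simp⟩
  have : Nonempty ι := ⟨a⟩
  rcases eq_or_ne S univ with rfl | hSu
  · simpa [twoLevelFun_univ] using exists_isPH_le_twoLevelFun_eq_two heven
  refine ⟨_, isPH_sum_ite_subset {{a}} (by simp) (by simpa using one_le_card_div_two heven),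
    fun T => ?_, ?_⟩
  · dsimp only
    rw [sum_singleton]
    split_ifs with h
    · exact one_le_twoLevelFun ⟨a, singleton_subset_iff.mp h⟩
    · exact twoLevelFun_nonneg T
  · rw [twoLevelFun_of_ne_univ ⟨a, ha⟩ hSu, sum_singleton,
      if_pos (singleton_subset_iff.mpr ha)]

end

/-- The subadditive function equal to 1 on proper nonempty sets and 2 on the full even
ground set is not MPH-`k` for any `k < m/2`, but is MPH-`(m/2)`. -/
theorem subadditive_needs_MPH_half {ι : Type u} [Fintype ι] [DecidableEq ι]
    (heven : Even (Fintype.card ι)) (f : Finset ι → ℝ)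
    (hf : ∀ S : Finset ι, f S =
      if S = ∅ then 0 else if S = Finset.univ then 2 else 1) :
    (∀ S T : Finset ι, f (S ∪ T) ≤ f S + f T) ∧
    (∀ k : ℕ, k < Fintype.card ι / 2 → ¬ IsMPH k f) ∧
    IsMPH (Fintype.card ι / 2) f := by
  obtain rfl : f = twoLevelFun := funext hf
  exact ⟨twoLevelFun_union_le, fun k hk => not_isMPH_twoLevelFun (by omega),
    isMPH_twoLevelFun heven⟩
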